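/- arXiv:2206.09663 — 3 statements merged into one kernel-verified Lean document; each statement's English description precedes it below -/
import Mathlib

section
/- For every n ∈ ℕ, the average over the torus (1/(2π)^d) ∫_{𝕋^d} Tr A_α^n(k) dk equals Σ_{c∈C_n^0} cos α(c), where C_n^0 is the set of all cycles of length n with zero index τ(c) = 0. -/
/-!
Writing the adjacency matrix as `A = S * T`, with `S` the weighted source incidence matrix
(vertices × edges) and `T` the target incidence matrix (edges × vertices), gives
`tr (A ^ n) = tr ((T * S) ^ n)`, and the edge transfer matrix `T * S` turns the trace into a sum
over closed walks `c` of length `n` of `exp (-i (α(c) + ⟨τ(c), k⟩))`. Averaging over the torus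
keeps exactly the walks with `τ(c) = 0`. Reversing a walk preserves `τ(c) = 0` and negates `α(c)`,
so the imaginary parts `sin α(c)` cancel in pairs.
-/

open Finset MeasureTheory Complex

namespace Matrix

variable {ι R : Type*} [Fintype ι] [DecidableEq ι] [CommSemiring R]

theorem pow_succ_apply_eq_sum_prod (N : Matrix ι ι R) (n : ℕ) (x y : ι) :
    (N ^ (n + 1)) x y = ∑ c : Fin n → ι,
      ∏ i, N (Fin.cons (α := fun _ => ι) x c i) (Fin.snoc (α := fun _ => ι) c y i) := by
  induction n generalizing x with
  | zero => simp [Fin.snoc]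
  | succ n ih =>
    rw [pow_succ', mul_apply, ← (Fin.consEquiv fun _ => ι).sum_comp, Fintype.sum_prod_type]
    refine sum_congr rfl fun z _ => ?_
    simp only [ih, mul_sum, Fin.consEquiv, Equiv.coe_fn_mk]
    refine sum_congr rfl fun c _ => ?_
    rw [Fin.prod_univ_succ (n := n + 1), ← Fin.cons_snoc_eq_snoc_cons]
    simp only [Fin.cons_zero, Fin.cons_succ]

theorem trace_pow_succ_eq_sum_prod (N : Matrix ι ι R) (n : ℕ) :
    trace (N ^ (n + 1)) = ∑ c : Fin (n + 1) → ι, ∏ i, N (c i) (c (finRotate _ i)) := by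
  simp only [trace, diag_apply, pow_succ_apply_eq_sum_prod, Fin.snoc_eq_cons_rotate]
  rw [← (Fin.consEquiv fun _ => ι).sum_comp, Fintype.sum_prod_type]
  rfl

theorem trace_mul_pow_succ_comm {m p : Type*} [Fintype m] [DecidableEq m] [Fintype p]
    [DecidableEq p] (B : Matrix m p R) (C : Matrix p m R) (n : ℕ) :
    trace ((B * C) ^ (n + 1)) = trace ((C * B) ^ (n + 1)) := by
  have hshift : ∀ k : ℕ, (B * C) ^ (k + 1) = B * (C * B) ^ k * C := by
    intro k
    induction k with
    | zero => simp
    | succ k ih => simp only [pow_succ _ (k + 1), ih, pow_succ _ k, Matrix.mul_assoc]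
  rw [hshift, Matrix.mul_assoc, trace_mul_comm, Matrix.mul_assoc, ← pow_succ]

end Matrix

section EdgeWeights

variable {V E R : Type*} [DecidableEq V] [CommSemiring R] (src tgt : E → V) (w : E → R)

def closedWalks [Fintype E] (n : ℕ) : Finset (Fin n → E) :=
  univ.filter fun c => ∀ s, tgt (c s) = src (c (finRotate n s))

def edgeWeightMatrix [Fintype E] : Matrix V V R :=
  Matrix.of fun x y => ∑ e ∈ univ.filter (fun e => src e = x ∧ tgt e = y), w e

def srcIncidenceMatrix : Matrix V E R := Matrix.of fun x e => if src e = x then w e else 0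

def tgtIncidenceMatrix : Matrix E V R := Matrix.of fun e y => if tgt e = y then 1 else 0

theorem edgeWeightMatrix_eq_mul [Fintype E] :
    edgeWeightMatrix src tgt w = srcIncidenceMatrix src w * tgtIncidenceMatrix (R := R) tgt := by
  ext x y
  simp only [edgeWeightMatrix, srcIncidenceMatrix, tgtIncidenceMatrix, Matrix.mul_apply,
    Matrix.of_apply, mul_ite, mul_one, mul_zero, sum_filter, ← ite_and, and_comm]

theorem tgtIncidenceMatrix_mul_srcIncidenceMatrix_apply [Fintype V] (e f : E) :
    (tgtIncidenceMatrix (R := R) tgt * srcIncidenceMatrix src w) e f =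
      if tgt e = src f then w f else 0 := by
  simp only [tgtIncidenceMatrix, srcIncidenceMatrix, Matrix.mul_apply, Matrix.of_apply, ite_mul,
    one_mul, zero_mul, sum_ite_eq, mem_univ, if_true, eq_comm (a := src f)]

theorem trace_edgeWeightMatrix_pow [Fintype V] [Fintype E] {n : ℕ} (hn : 0 < n) :
    Matrix.trace (edgeWeightMatrix src tgt w ^ n) = ∑ c ∈ closedWalks src tgt n, ∏ i, w (c i) := by
  obtain ⟨n, rfl⟩ : ∃ m, n = m + 1 := ⟨n - 1, by omega⟩
  classical
  rw [edgeWeightMatrix_eq_mul, Matrix.trace_mul_pow_succ_comm, Matrix.trace_pow_succ_eq_sum_prod,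
    closedWalks, sum_filter]
  refine sum_congr rfl fun c _ => ?_
  simp only [tgtIncidenceMatrix_mul_srcIncidenceMatrix_apply]
  rw [Fintype.prod_ite_zero, Equiv.prod_comp (finRotate _) fun i => w (c i)]
  congr 1

end EdgeWeights

theorem Fin.finRotate_rev_finRotate {n : ℕ} (s : Fin n) :
    finRotate n (finRotate n s).rev = s.rev := by
  have := s.neZero
  simp only [finRotate_apply, Fin.rev_add, sub_add_cancel]

section Reversal

variable {V E : Type*} {n : ℕ} (inv : E → E)

def reverseWalk (c : Fin n → E) : Fin n → E := fun i => inv (c i.rev)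

theorem reverseWalk_reverseWalk (hinv : Function.Involutive inv) (c : Fin n → E) :
    reverseWalk inv (reverseWalk inv c) = c :=
  funext fun i => by simp only [reverseWalk, hinv _, Fin.rev_rev]

theorem reverseWalk_isClosed {src tgt : E → V} (hsrc : ∀ e, src (inv e) = tgt e)
    (htgt : ∀ e, tgt (inv e) = src e) {c : Fin n → E}
    (hc : ∀ s, tgt (c s) = src (c (finRotate n s))) (s : Fin n) :
    tgt (reverseWalk inv c s) = src (reverseWalk inv c (finRotate n s)) := by
  rw [reverseWalk, reverseWalk, htgt, hsrc, hc, Fin.finRotate_rev_finRotate]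

theorem sum_reverseWalk {G : Type*} [AddCommGroup G] (φ : E → G) (hφ : ∀ e, φ (inv e) = -φ e)
    (c : Fin n → E) : ∑ i, φ (reverseWalk inv c i) = -∑ i, φ (c i) := by
  simp only [reverseWalk, hφ, sum_neg_distrib]
  exact congrArg Neg.neg (Equiv.sum_comp Fin.revPerm fun i => φ (c i))

theorem reverseWalk_isClosed_and_index_eq_zero {d : ℕ} {src tgt : E → V} (τ : E → Fin d → ℤ)
    (hsrc : ∀ e, src (inv e) = tgt e) (htgt : ∀ e, tgt (inv e) = src e)
    (hτ : ∀ e, τ (inv e) = -τ e) {c : Fin n → E}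
    (hc : (∀ s, tgt (c s) = src (c (finRotate n s))) ∧ ∀ s, ∑ i, τ (c i) s = 0) :
    (∀ s, tgt (reverseWalk inv c s) = src (reverseWalk inv c (finRotate n s))) ∧
      ∀ s, ∑ i, τ (reverseWalk inv c i) s = 0 := by
  refine ⟨reverseWalk_isClosed inv hsrc htgt hc.1, fun s => ?_⟩
  rw [sum_reverseWalk inv (τ · s) (fun e => by rw [hτ, Pi.neg_apply]), hc.2 s, neg_zero]

end Reversal

theorem integral_exp_int_mul_I_Icc (m : ℤ) :
    ∫ t in Set.Icc (-Real.pi) Real.pi, exp (-I * m * t) =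
      if m = 0 then (2 * Real.pi : ℂ) else 0 := by
  rw [integral_Icc_eq_integral_Ioc, ← intervalIntegral.integral_of_le (by linarith [Real.pi_pos])]
  split_ifs with hm
  · simp [hm, two_mul]
  · have hc : -I * m ≠ 0 := by simp [I_ne_zero, hm]
    have hperiodic :
        -I * m * Real.pi = -I * m * (-Real.pi : ℝ) + (-m : ℤ) * (2 * Real.pi * I) := by
      push_cast; ring
    rw [integral_exp_mul_complex hc, hperiodic, exp_add, exp_int_mul_two_pi_mul_I, mul_one,
      sub_self, zero_div]

theorem setIntegral_univ_pi_prod_eq_prod {ι : Type*} [Fintype ι] (s : ι → Set ℝ)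
    (f : ι → ℝ → ℂ) : ∫ k in Set.univ.pi s, ∏ i, f i (k i) = ∏ i, ∫ t in s i, f i t := by
  rw [volume_pi, Measure.restrict_pi_pi, integral_fintype_prod_eq_prod]

theorem setIntegral_torus_prod_exp {d : ℕ} (T : Fin d → ℤ) :
    ∫ k in Set.univ.pi (fun _ : Fin d => Set.Icc (-Real.pi) Real.pi), ∏ s, exp (-I * T s * k s) =
      if ∀ s, T s = 0 then (2 * Real.pi : ℂ) ^ d else 0 := by
  rw [setIntegral_univ_pi_prod_eq_prod _ fun s t => exp (-I * T s * t)]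
  simp only [integral_exp_int_mul_I_Icc, Fintype.prod_ite_zero, prod_const, card_univ,
    Fintype.card_fin]

theorem prod_exp_neg_I_mul_add_sum {n d : ℕ} (a : Fin n → ℝ) (T : Fin n → Fin d → ℤ)
    (k : Fin d → ℝ) :
    ∏ i, exp (-I * ((a i : ℂ) + ∑ s, (T i s : ℂ) * (k s : ℂ))) =
      exp (-I * (∑ i, a i : ℝ)) * ∏ s, exp (-I * (∑ i, T i s : ℤ) * k s) := by
  rw [← exp_sum, ← exp_sum, ← exp_add]
  push_cast
  simp only [mul_add, sum_add_distrib, mul_sum, sum_mul]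
  rw [sum_comm (f := fun s i => _)]
  simp only [mul_assoc]

theorem Finset.sum_exp_neg_mul_I_eq_sum_cos {ι : Type*} (S : Finset ι) (f : ι → ℝ) (ρ : ι → ι)
    (hρS : ∀ c ∈ S, ρ c ∈ S) (hρρ : ∀ c ∈ S, ρ (ρ c) = c) (hfρ : ∀ c ∈ S, f (ρ c) = -f c) :
    ∑ c ∈ S, exp (-I * f c) = ((∑ c ∈ S, Real.cos (f c) : ℝ) : ℂ) := by
  have hsin : ∑ c ∈ S, Real.sin (f c) = 0 := by
    have hneg : ∑ c ∈ S, Real.sin (f c) = -∑ c ∈ S, Real.sin (f c) := by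
      rw [← sum_neg_distrib]
      exact sum_nbij' ρ ρ hρS hρS hρρ hρρ fun c hc => by rw [hfρ c hc, Real.sin_neg, neg_neg]
    linarith
  have hexp : ∀ x : ℝ, exp (-I * x) = Real.cos x - Real.sin x * I := fun x => by
    rw [show -I * x = (-x : ℝ) * I by push_cast; ring, exp_mul_I, ← ofReal_cos, ← ofReal_sin,
      Real.cos_neg, Real.sin_neg]
    push_cast; ring
  simp only [hexp, sum_sub_distrib, ← sum_mul]
  rw [← ofReal_sum, ← ofReal_sum, hsin, ofReal_zero, zero_mul, sub_zero]

theorem integral_trace_pow_magnetic_adjacency_general {d : ℕ} {V E : Type*}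
    [Fintype V] [DecidableEq V] [Fintype E]
    (src tgt : E → V) (inv : E → E) (τ : E → Fin d → ℤ) (α : E → ℝ)
    (hinv : Function.Involutive inv)
    (hsrc : ∀ e, src (inv e) = tgt e) (htgt : ∀ e, tgt (inv e) = src e)
    (hτ : ∀ e, τ (inv e) = - τ e) (hα : ∀ e, α (inv e) = - α e)
    (A : (Fin d → ℝ) → Matrix V V ℂ)
    (hA : ∀ k x y, A k x y =
      ∑ e ∈ univ.filter (fun e => src e = x ∧ tgt e = y),
        Complex.exp (-Complex.I * ((α e : ℂ) + ∑ s, (τ e s : ℂ) * (k s : ℂ))))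
    (n : ℕ) (hn : 0 < n) :
    (1 / (2 * Real.pi) ^ d : ℂ) *
      ∫ k in Set.pi Set.univ (fun _ : Fin d => Set.Icc (-Real.pi) Real.pi),
        Matrix.trace ((A k) ^ n) =
      ((∑ c ∈ univ.filter (fun c : Fin n → E =>
            (∀ s, tgt (c s) = src (c (finRotate n s))) ∧
            (∀ s : Fin d, ∑ i, τ (c i) s = 0)),
          Real.cos (∑ s, α (c s)) : ℝ) : ℂ) := by
  have htrace : ∀ k, Matrix.trace (A k ^ n) = ∑ c ∈ closedWalks src tgt n,
      exp (-I * (∑ i, α (c i) : ℝ)) * ∏ s, exp (-I * (∑ i, τ (c i) s : ℤ) * k s) := fun k => by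
    rw [show A k = edgeWeightMatrix src tgt _ from Matrix.ext (hA k),
      trace_edgeWeightMatrix_pow _ _ _ hn]
    exact sum_congr rfl fun c _ => prod_exp_neg_I_mul_add_sum _ _ k
  have hintegrable : ∀ T : Fin d → ℤ, IntegrableOn (fun k : Fin d → ℝ => ∏ s, exp (-I * T s * k s))
      (Set.univ.pi fun _ => Set.Icc (-Real.pi) Real.pi) := fun T =>
    (by fun_prop : Continuous _).continuousOn.integrableOn_compact
      (isCompact_univ_pi fun _ => isCompact_Icc)
  simp_rw [htrace]
  rw [integral_finsetSum _ fun c _ => (hintegrable _).const_mul _]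
  simp_rw [integral_const_mul, setIntegral_torus_prod_exp, mul_ite, mul_zero]
  rw [← sum_filter, ← sum_mul, one_div_mul_eq_div,
    mul_div_cancel_right₀ _ (by simp [Real.pi_ne_zero]), closedWalks, filter_filter,
    ← sum_exp_neg_mul_I_eq_sum_cos _ (fun c => ∑ i, α (c i)) (reverseWalk inv)]
  · intro c hc
    simp only [mem_filter, mem_univ, true_and] at hc ⊢
    exact reverseWalk_isClosed_and_index_eq_zero inv τ hsrc htgt hτ hc
  · exact fun c _ => reverseWalk_reverseWalk inv hinv c
  · exact fun c _ => sum_reverseWalk inv α hα c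

/-- The average of `Tr A_α(k)^n` over the torus equals
`∑_{c ∈ C_n^0} cos α(c)`, the sum over cycles of length `n` with zero index. -/
theorem integral_trace_pow_magnetic_adjacency {d : ℕ} {V E : Type*}
    [Fintype V] [DecidableEq V] [Fintype E] [DecidableEq E]
    (src tgt : E → V) (inv : E → E) (τ : E → Fin d → ℤ) (α : E → ℝ)
    (hinv : Function.Involutive inv)
    (hsrc : ∀ e, src (inv e) = tgt e) (htgt : ∀ e, tgt (inv e) = src e)
    (hτ : ∀ e, τ (inv e) = - τ e) (hα : ∀ e, α (inv e) = - α e)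
    (A : (Fin d → ℝ) → Matrix V V ℂ)
    (hA : ∀ k x y, A k x y =
      ∑ e ∈ univ.filter (fun e => src e = x ∧ tgt e = y),
        Complex.exp (-Complex.I * ((α e : ℂ) + ∑ s, (τ e s : ℂ) * (k s : ℂ))))
    (n : ℕ) (hn : 0 < n) :
    (1 / (2 * Real.pi) ^ d : ℂ) *
      ∫ k in Set.pi Set.univ (fun _ : Fin d => Set.Icc (-Real.pi) Real.pi),
        Matrix.trace ((A k) ^ n) =
      ((∑ c ∈ univ.filter (fun c : Fin n → E =>
            (∀ s, tgt (c s) = src (c (finRotate n s))) ∧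
            (∀ s : Fin d, ∑ i, τ (c i) s = 0)),
          Real.cos (∑ s, α (c s)) : ℝ) : ℂ) :=
  integral_trace_pow_magnetic_adjacency_general src tgt inv τ α hinv hsrc htgt hτ hα A hA n hn
end

section
/- Let C be the set of cycles of length n with a fixed nonzero index m in a finite graph, where n is the minimal length of cycles with index m and m is primitive (m/q ∉ ℤ^d for every integer q ≥ 2). If c_1,...,c_p are all such cycles up to cyclic edge permutations, then |Σ_{c∈C} e^{-iα(c)}| = n·|1 + Σ_{j=2}^p e^{-i(α(c_j)-α(c_1))}|. In particular: (i) if p = 1 this equals n > 0; (ii) if p = 2 it equals 2n·|cos((α(c_2)-α(c_1))/2)|; (iii) if p ≥ 2 and max_{2≤j≤p}|α(c_j)-α(c_1)| = α_+ < π/2 (with α taking values in (-π, π]), then it is at least n·(1 + (p-1)·cos α_+) > 0. -/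
open Finset

section FluxAux

lemma flux_aux_bezout (a n : ℕ) (hn : 0 < n) : ∃ k : ℕ, (k * a) % n = Nat.gcd a n % n := by
  have hg : (Nat.gcd a n : ℤ) = a * Nat.gcdA a n + n * Nat.gcdB a n := Nat.gcd_eq_gcd_ab a n
  set A := Nat.gcdA a n
  refine ⟨(A % n).toNat, ?_⟩
  have hn' : (0:ℤ) < n := by exact_mod_cast hn
  have hk : ((A % n).toNat : ℤ) = A % n := Int.toNat_of_nonneg (Int.emod_nonneg A hn'.ne')
  have h1 : ((A % n).toNat : ℤ) ≡ A [ZMOD n] := by rw [hk]; exact Int.emod_emod_of_dvd A dvd_rfl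
  have h3 : (A * a : ℤ) ≡ Nat.gcd a n [ZMOD n] :=
    (Int.modEq_iff_dvd.mpr ⟨Nat.gcdB a n, by rw [hg]; ring⟩)
  have h4 := (h1.mul_right a).trans h3
  rw [Int.ModEq] at h4
  have := congrArg Int.toNat h4
  rwa [← Int.natCast_mul, ← Int.natCast_mod, ← Int.natCast_mod, Int.toNat_natCast,
    Int.toNat_natCast] at this

lemma flux_aux_nsmul_val {n : ℕ} [NeZero n] (δ : Fin n) (k : ℕ) :
    ((k • δ : Fin n) : ℕ) = (k * δ.val) % n := by
  induction k with
  | zero => simp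
  | succ k ih =>
    rw [succ_nsmul, Fin.val_add, ih, Nat.mod_add_mod]
    congr 1; ring

lemma flux_aux_period {n : ℕ} [NeZero n] {E : Type*} (c : Fin n → E) (δ : Fin n)
    (h : ∀ s, c (s + δ) = c s) : ∀ (k : ℕ) (s), c (s + k • δ) = c s := by
  intro k
  induction k with
  | zero => simp
  | succ k ih => intro s; rw [succ_nsmul, ← add_assoc, h, ih]

lemma flux_aux_key {d n : ℕ} {E : Type*} [NeZero n] (τ : E → Fin d → ℤ) (m : Fin d → ℤ)
    (hprim : ∀ q : ℕ, 2 ≤ q → ¬ ∃ m' : Fin d → ℤ, (fun s => (q : ℤ) * m' s) = m)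
    (c : Fin n → E) (hflux : (fun s => ∑ i, τ (c i) s) = m)
    (δ : Fin n) (hδ : ∀ s, c (s + δ) = c s) : δ = 0 := by
  have hn : 0 < n := Nat.pos_of_ne_zero (NeZero.ne n)
  by_contra hδ0
  have hδv : 0 < δ.val := by
    rcases Nat.eq_zero_or_pos δ.val with h | h
    · exact absurd (Fin.ext (by simpa using h)) hδ0
    · exact h
  set g := Nat.gcd δ.val n with hgdef
  have hgd : g ∣ δ.val := Nat.gcd_dvd_left _ _
  have hgn : g ∣ n := Nat.gcd_dvd_right _ _
  have hg0 : 0 < g := Nat.gcd_pos_of_pos_left _ hδv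
  have hgltn : g < n := lt_of_le_of_lt (Nat.le_of_dvd hδv hgd) δ.isLt
  obtain ⟨q, hngq⟩ := hgn
  have hq2 : 2 ≤ q := by
    rcases Nat.lt_or_ge q 2 with h | h
    · interval_cases q <;> omega
    · exact h
  obtain ⟨k, hk⟩ := flux_aux_bezout δ.val n hn
  rw [Nat.mod_eq_of_lt hgltn] at hk
  have hδ'eq : (⟨g, hgltn⟩ : Fin n) = k • δ := by
    apply Fin.ext
    rw [flux_aux_nsmul_val, hk]
  have hper : ∀ s, c (s + (⟨g, hgltn⟩ : Fin n)) = c s := by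
    intro s; rw [hδ'eq]; exact flux_aux_period c δ hδ k s
  have hperk : ∀ (b : ℕ) (s), c (s + b • (⟨g, hgltn⟩ : Fin n)) = c s :=
    flux_aux_period c _ hper
  have hsum : ∀ s : Fin d,
      (∑ i, τ (c i) s) = (q : ℤ) * ∑ t : Fin g, τ (c ⟨t.val, lt_trans t.isLt hgltn⟩) s := by
    intro s
    have hqg : q * g = n := (hngq.trans (Nat.mul_comm g q)).symm
    let e : Fin q × Fin g ≃ Fin n := finProdFinEquiv.trans (finCongr hqg)
    have he : ∀ x : Fin q × Fin g, c (e x) = c ⟨x.2.val, lt_trans x.2.isLt hgltn⟩ := by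
      rintro ⟨b, a⟩
      have hv : ((e (b, a)) : ℕ) = a.val + g * b.val := by
        rw [show e (b, a) = finCongr hqg (finProdFinEquiv (b, a)) from rfl]
        simp [finProdFinEquiv_apply_val]
      have h2 : a.val + b.val * g < n := by
        calc a.val + b.val * g < g + b.val * g := by omega
        _ = (b.val + 1) * g := by ring
        _ ≤ q * g := Nat.mul_le_mul_right g b.isLt
        _ = n := hqg
      have h1 : b.val * g < n := lt_of_le_of_lt (Nat.le_add_left _ _) h2
      have hba : (e (b, a)) = (⟨a.val, lt_trans a.isLt hgltn⟩ : Fin n)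
          + b.val • (⟨g, hgltn⟩ : Fin n) := by
        apply Fin.ext
        rw [hv, Fin.val_add, flux_aux_nsmul_val]
        show a.val + g * b.val = (a.val + (b.val * g) % n) % n
        rw [Nat.mod_eq_of_lt h1, Nat.mod_eq_of_lt h2]
        ring
      rw [hba, hperk]
    calc (∑ i, τ (c i) s) = ∑ x : Fin q × Fin g, τ (c (e x)) s :=
          (Fintype.sum_equiv e _ _ (fun _ => rfl)).symm
      _ = ∑ x : Fin q × Fin g, τ (c ⟨x.2.val, lt_trans x.2.isLt hgltn⟩) s :=
          Finset.sum_congr rfl fun x _ => by rw [he]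
      _ = ∑ _b : Fin q, ∑ a : Fin g, τ (c ⟨a.val, lt_trans a.isLt hgltn⟩) s :=
          Fintype.sum_prod_type _
      _ = (q : ℤ) * ∑ t : Fin g, τ (c ⟨t.val, lt_trans t.isLt hgltn⟩) s := by
          rw [Finset.sum_const, Finset.card_univ, Fintype.card_fin, nsmul_eq_mul]
  exact hprim q hq2 ⟨fun s => ∑ t : Fin g, τ (c ⟨t.val, lt_trans t.isLt hgltn⟩) s, by
    funext s; rw [← hsum s]; exact congrFun hflux s⟩

lemma flux_finRotate_eq_add_one {n : ℕ} [NeZero n] (s : Fin n) : finRotate n s = s + 1 := by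
  cases n with
  | zero => exact s.elim0
  | succ N => exact finRotate_succ_apply s

lemma flux_abs_exp (x : ℝ) : ‖Complex.exp (-Complex.I * (x : ℂ))‖ = 1 := by
  rw [show -Complex.I * (x : ℂ) = ((-x : ℝ) : ℂ) * Complex.I by push_cast; ring,
    Complex.norm_exp_ofReal_mul_I]

lemma flux_re_exp (x : ℝ) : (Complex.exp (-Complex.I * (x : ℂ))).re = Real.cos x := by
  rw [show -Complex.I * (x : ℂ) = ((-x : ℝ) : ℂ) * Complex.I by push_cast; ring,
    Complex.exp_ofReal_mul_I_re, Real.cos_neg]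

lemma flux_exp_half (θ : ℝ) : 1 + Complex.exp (-Complex.I * (θ : ℂ)) =
    Complex.exp (-Complex.I * ((θ/2 : ℝ) : ℂ)) * (2 * (Real.cos (θ/2) : ℂ)) := by
  have e1 : -Complex.I * ((θ/2:ℝ):ℂ) + ((θ/2:ℝ):ℂ) * Complex.I = 0 := by push_cast; ring
  have e2 : -Complex.I * ((θ/2:ℝ):ℂ) + -((θ/2:ℝ):ℂ) * Complex.I = -Complex.I * θ := by
    push_cast; ring
  calc (1 : ℂ) + Complex.exp (-Complex.I * (θ : ℂ))
      = Complex.exp 0 + Complex.exp (-Complex.I * (θ:ℂ)) := by rw [Complex.exp_zero]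
    _ = Complex.exp (-Complex.I * ((θ/2:ℝ):ℂ)) *
        (Complex.exp (((θ/2:ℝ):ℂ) * Complex.I) + Complex.exp (-((θ/2:ℝ):ℂ) * Complex.I)) := by
        rw [mul_add, ← Complex.exp_add, ← Complex.exp_add, e1, e2]
    _ = _ := by rw [Complex.ofReal_cos, Complex.cos]; ring

end FluxAux
/-- If `n` is the minimal length of cycles with primitive nonzero index `m`, and
`c_1,…,c_p` are all such cycles up to cyclic edge permutations, then
`|∑_{c ∈ C_n^m} e^{-iα(c)}| = n·|1 + ∑_{j=2}^p e^{-iα(c_j - c_1)}|`, together with the special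
cases (i) `p = 1`, (ii) `p = 2`, (iii) `p ≥ 2` with all flux differences `< π/2` in modulus
(fluxes taken mod `2π` in `(-π,π]`). -/
theorem cycles_min_length_flux_sum {d : ℕ} {V E : Type*}
    [Fintype V] [DecidableEq V] [Fintype E] [DecidableEq E]
    (src tgt : E → V) (τ : E → Fin d → ℤ) (α : E → ℝ)
    (n p : ℕ) (hn : 0 < n) (hp : 0 < p)
    (m : Fin d → ℤ) (hm : m ≠ 0)
    (hprim : ∀ q : ℕ, 2 ≤ q → ¬ ∃ m' : Fin d → ℤ, (fun s => (q : ℤ) * m' s) = m)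
    (hmin : ∀ n' : ℕ, 0 < n' → n' < n → ∀ c : Fin n' → E,
      (∀ s, tgt (c s) = src (c (finRotate n' s))) → (fun s => ∑ i, τ (c i) s) ≠ m)
    (cs : Fin p → Fin n → E)
    (hcs : ∀ j, (∀ s, tgt (cs j s) = src (cs j (finRotate n s))) ∧
      (fun s => ∑ i, τ (cs j i) s) = m)
    (hcover : ∀ c : Fin n → E,
      ((∀ s, tgt (c s) = src (c (finRotate n s))) ∧ (fun s => ∑ i, τ (c i) s) = m) →
      ∃ (j : Fin p) (r : Fin n), c = fun s => cs j (s + r))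
    (hdist : ∀ (j j' : Fin p) (r : Fin n), (fun s => cs j (s + r)) = cs j' → j = j') :
    let A : Fin p → ℝ := fun j => ∑ s, α (cs j s)
    let D : Fin p → ℝ := fun j => Real.Angle.toReal ((A j - A ⟨0, hp⟩ : ℝ) : Real.Angle)
    let Sabs : ℝ := norm (∑ c ∈ univ.filter (fun c : Fin n → E =>
        (∀ s, tgt (c s) = src (c (finRotate n s))) ∧ (fun s => ∑ i, τ (c i) s) = m),
          Complex.exp (-Complex.I * ((∑ s, α (c s) : ℝ) : ℂ)))
    (Sabs = (n : ℝ) * norm (1 + ∑ j ∈ univ.erase (⟨0, hp⟩ : Fin p),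
        Complex.exp (-Complex.I * (D j : ℂ)))) ∧
    (p = 1 → Sabs = (n : ℝ) ∧ (0 : ℝ) < n) ∧
    (∀ h2 : p = 2, Sabs = 2 * (n : ℝ) * |Real.cos (D ⟨1, by omega⟩ / 2)|) ∧
    (∀ αplus : ℝ, 2 ≤ p → (∀ j, |D j| ≤ αplus) → αplus < Real.pi / 2 →
      (n : ℝ) * (1 + ((p : ℝ) - 1) * Real.cos αplus) ≤ Sabs ∧
      (0 : ℝ) < (n : ℝ) * (1 + ((p : ℝ) - 1) * Real.cos αplus)) := by
  haveI : NeZero n := ⟨hn.ne'⟩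
  intro A D Sabs
  -- the rotation map
  set F : Fin p × Fin n → (Fin n → E) := fun x => fun s => cs x.1 (s + x.2) with hF
  have hsum_rot : ∀ (j : Fin p) (r : Fin n), ∑ s, α (cs j (s + r)) = A j :=
    fun j r => Fintype.sum_equiv (Equiv.addRight r) _ _ (fun _ => rfl)
  have hinj : ∀ x y : Fin p × Fin n, F x = F y → x = y := by
    rintro ⟨j, r⟩ ⟨j', r'⟩ h
    have h' : (fun s => cs j (s + (r - r'))) = cs j' := by
      funext s
      have h1 := congrFun h (s - r')
      simp only [hF] at h1
      rw [show s - r' + r' = s by abel] at h1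
      rw [show s + (r - r') = s - r' + r by abel]
      exact h1
    obtain rfl : j = j' := hdist j j' (r - r') h'
    have hr0 : r - r' = 0 := flux_aux_key τ m hprim (cs j) (hcs j).2 (r - r')
      (fun s => congrFun h' s)
    obtain rfl : r = r' := sub_eq_zero.mp hr0
    rfl
  have himage : univ.filter (fun c : Fin n → E =>
        (∀ s, tgt (c s) = src (c (finRotate n s))) ∧ (fun s => ∑ i, τ (c i) s) = m)
      = Finset.image F univ := by
    ext c
    simp only [Finset.mem_filter, Finset.mem_univ, true_and, Finset.mem_image]
    constructor
    · intro hc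
      obtain ⟨j, r, rfl⟩ := hcover c hc
      exact ⟨(j, r), rfl⟩
    · rintro ⟨⟨j, r⟩, rfl⟩
      constructor
      · intro s
        have h1 := (hcs j).1 (s + r)
        rw [flux_finRotate_eq_add_one] at h1 ⊢
        rw [show s + r + 1 = s + 1 + r by abel] at h1
        exact h1
      · funext s
        have h1 := congrFun (hcs j).2 s
        simp only [hF]
        rw [← h1]
        exact Fintype.sum_equiv (Equiv.addRight r) _ _ (fun _ => rfl)
  -- main sum computation
  have hS : (∑ c ∈ univ.filter (fun c : Fin n → E =>
        (∀ s, tgt (c s) = src (c (finRotate n s))) ∧ (fun s => ∑ i, τ (c i) s) = m),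
          Complex.exp (-Complex.I * ((∑ s, α (c s) : ℝ) : ℂ)))
      = (n : ℂ) * ∑ j, Complex.exp (-Complex.I * ((A j : ℝ) : ℂ)) := by
    rw [himage, Finset.sum_image (fun x _ y _ h => hinj x y h)]
    rw [show (univ : Finset (Fin p × Fin n)) = (univ : Finset (Fin p)) ×ˢ univ from rfl]
    rw [Finset.sum_product]
    have : ∀ j : Fin p, ∑ r : Fin n,
        Complex.exp (-Complex.I * ((∑ s, α (F (j, r) s) : ℝ) : ℂ))
        = (n : ℂ) * Complex.exp (-Complex.I * ((A j : ℝ) : ℂ)) := by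
      intro j
      have : ∀ r : Fin n, Complex.exp (-Complex.I * ((∑ s, α (F (j, r) s) : ℝ) : ℂ))
          = Complex.exp (-Complex.I * ((A j : ℝ) : ℂ)) := by
        intro r
        simp only [hF]
        rw [hsum_rot]
      rw [Finset.sum_congr rfl (fun r _ => this r), Finset.sum_const, Finset.card_univ,
        Fintype.card_fin, nsmul_eq_mul]
    rw [Finset.sum_congr rfl (fun j _ => this j), ← Finset.mul_sum]
  -- factor out the first phase
  have hfactor : ∀ j : Fin p, Complex.exp (-Complex.I * ((A j : ℝ) : ℂ))
      = Complex.exp (-Complex.I * ((A ⟨0, hp⟩ : ℝ) : ℂ)) * Complex.exp (-Complex.I * (D j : ℂ)) := by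
    intro j
    obtain ⟨k, hk⟩ : ∃ k : ℤ, (A j - A ⟨0, hp⟩) - D j = 2 * Real.pi * k :=
      Real.Angle.angle_eq_iff_two_pi_dvd_sub.mp (Real.Angle.coe_toReal _).symm
    have hk' : (A j : ℝ) = A ⟨0, hp⟩ + D j + 2 * Real.pi * k := by linarith
    calc Complex.exp (-Complex.I * ((A j : ℝ) : ℂ))
        = Complex.exp (-Complex.I * ((A ⟨0, hp⟩ : ℝ) : ℂ)) * Complex.exp (-Complex.I * (D j : ℂ))
          * Complex.exp ((-k : ℤ) * (2 * (Real.pi : ℂ) * Complex.I)) := by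
          rw [← Complex.exp_add, ← Complex.exp_add]
          congr 1
          rw [show ((A j : ℝ) : ℂ) = ((A ⟨0, hp⟩ : ℝ) : ℂ) + ((D j : ℝ) : ℂ)
            + 2 * (Real.pi : ℂ) * (k : ℂ) by push_cast [hk']; ring]
          push_cast
          ring
      _ = _ := by rw [Complex.exp_int_mul_two_pi_mul_I]; ring
  have hsplit : (∑ j, Complex.exp (-Complex.I * ((A j : ℝ) : ℂ)))
      = Complex.exp (-Complex.I * ((A ⟨0, hp⟩ : ℝ) : ℂ)) *
        (1 + ∑ j ∈ univ.erase (⟨0, hp⟩ : Fin p), Complex.exp (-Complex.I * (D j : ℂ))) := by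
    rw [← Finset.add_sum_erase _ _ (Finset.mem_univ (⟨0, hp⟩ : Fin p))]
    rw [mul_add, mul_one, Finset.mul_sum]
    congr 1
    exact Finset.sum_congr rfl fun j _ => hfactor j
  have habs : Sabs = (n : ℝ) * norm (1 + ∑ j ∈ univ.erase (⟨0, hp⟩ : Fin p),
      Complex.exp (-Complex.I * (D j : ℂ))) := by
    show norm _ = _
    rw [hS, hsplit, norm_mul, norm_mul, flux_abs_exp, Complex.norm_natCast]
    ring
  refine ⟨habs, ?_, ?_, ?_⟩
  · -- p = 1
    intro hp1
    subst hp1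
    have h1 : (univ.erase (⟨0, hp⟩ : Fin 1)) = ∅ := by
      apply Finset.eq_empty_of_forall_notMem
      intro j hj
      simp only [Finset.mem_erase, Finset.mem_univ, and_true] at hj
      exact hj (Subsingleton.elim j _)
    rw [habs, h1]
    simp
    exact_mod_cast hn
  · -- p = 2
    intro hp2
    subst hp2
    have h1 : (univ.erase (⟨0, hp⟩ : Fin 2)) = {(⟨1, by omega⟩ : Fin 2)} := by
      ext j
      fin_cases j <;> simp [Fin.ext_iff]
    rw [habs, h1, Finset.sum_singleton, flux_exp_half, norm_mul, norm_mul, flux_abs_exp,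
      Complex.norm_real, Real.norm_eq_abs, Complex.norm_two]
    ring
  · -- lower bound
    intro αplus hp2 hD hα
    have hπ : 0 < Real.pi := Real.pi_pos
    have hα0 : 0 ≤ αplus := le_trans (abs_nonneg _) (hD ⟨0, hp⟩)
    have hcos_pos : 0 < Real.cos αplus :=
      Real.cos_pos_of_mem_Ioo ⟨by linarith, hα⟩
    have hcosD : ∀ j : Fin p, Real.cos αplus ≤ Real.cos (D j) := by
      intro j
      rw [← Real.cos_abs (D j)]
      exact Real.cos_le_cos_of_nonneg_of_le_pi (abs_nonneg _) (by linarith) (hD j)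
    set T : ℂ := ∑ j ∈ univ.erase (⟨0, hp⟩ : Fin p), Complex.exp (-Complex.I * (D j : ℂ)) with hT
    have hcard : (univ.erase (⟨0, hp⟩ : Fin p)).card = p - 1 := by
      rw [Finset.card_erase_of_mem (Finset.mem_univ _), Finset.card_univ, Fintype.card_fin]
    have hre : (1 + T).re = 1 + ∑ j ∈ univ.erase (⟨0, hp⟩ : Fin p), Real.cos (D j) := by
      rw [Complex.add_re, Complex.one_re, Complex.re_sum]
      congr 1
      exact Finset.sum_congr rfl fun j _ => flux_re_exp (D j)
    have hlow : 1 + ((p : ℝ) - 1) * Real.cos αplus ≤ (1 + T).re := by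
      rw [hre]
      have : ((p : ℝ) - 1) * Real.cos αplus
          ≤ ∑ j ∈ univ.erase (⟨0, hp⟩ : Fin p), Real.cos (D j) := by
        have h2 : ∑ j ∈ univ.erase (⟨0, hp⟩ : Fin p), Real.cos αplus
            ≤ ∑ j ∈ univ.erase (⟨0, hp⟩ : Fin p), Real.cos (D j) :=
          Finset.sum_le_sum fun j _ => hcosD j
        rwa [Finset.sum_const, hcard, nsmul_eq_mul, Nat.cast_sub (by omega), Nat.cast_one] at h2
      linarith
    have hre_le : (1 + T).re ≤ ‖1 + T‖ := Complex.re_le_norm _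
    have hpos : (0 : ℝ) < 1 + ((p : ℝ) - 1) * Real.cos αplus := by
      have : (1 : ℝ) ≤ (p : ℝ) := by exact_mod_cast Nat.one_le_of_lt hp2
      nlinarith
    constructor
    · rw [habs]
      have hn' : (0 : ℝ) ≤ (n : ℝ) := Nat.cast_nonneg n
      exact mul_le_mul_of_nonneg_left (le_trans hlow hre_le) hn'
    · have hn' : (0 : ℝ) < (n : ℝ) := by exact_mod_cast hn
      exact mul_pos hn' hpos
end

section
/- Consider the 4×4 Hermitian matrix Δ_α(k) = diag(3,2,2,3) - A_α(k), where A_α(k) has rows (0, e^{iφ}, 1, e^{ik}), (e^{-iφ}, 0, 0, 1), (1, 0, 0, 1), (e^{-ik}, 1, 1, 0), for parameters φ, k ∈ ℝ. Then det(λI_4 - Δ_α(k)) = λ^4 - 10λ^3 + 32λ^2 + 2λ(cos k + cos(k-φ) - 18) - 4cos k - 4cos(k-φ) - 2cos φ + 10. In particular, when φ = π the characteristic polynomial is independent of k and the eigenvalues of Δ_α(k) are 2±√2 and 3±√3. -/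
/-!
Expanding the determinant, the phases `e^{±iφ}`, `e^{±ik}` enter only through the products
`e^{iθ} e^{-iθ} = 1` and the sums `e^{iθ} + e^{-iθ} = 2 cos θ` for `θ = φ, k, k - φ`. At `φ = π`
we have `cos (k - π) = -cos k`, so the `k`-dependence cancels and the characteristic polynomial is
`λ⁴ - 10λ³ + 32λ² - 36λ + 12 = (λ² - 4λ + 2)(λ² - 6λ + 6)`.
-/

open Matrix Complex

/-- `a, b` play the roles of `e^{iφ}, e^{ik}` and `a', b'` of their inverses, which turns the
characteristic polynomial into a polynomial identity over any commutative ring. -/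
def fiberAdjacency {R : Type*} [CommRing R] (a a' b b' : R) : Matrix (Fin 4) (Fin 4) R :=
  !![0, a, 1, b;
     a', 0, 0, 1;
     1, 0, 0, 1;
     b', 1, 1, 0]

theorem det_smul_one_sub_diagonal_sub_fiberAdjacency {R : Type*} [CommRing R]
    (lam a a' b b' : R) (ha : a * a' = 1) (hb : b * b' = 1) :
    det (lam • (1 : Matrix (Fin 4) (Fin 4) R) -
        (diagonal ![3, 2, 2, 3] - fiberAdjacency a a' b b')) =
      lam ^ 4 - 10 * lam ^ 3 + 32 * lam ^ 2 + lam * (b + b' + (a' * b + a * b') - 36)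
        - 2 * (b + b') - 2 * (a' * b + a * b') - (a + a') + 10 := by
  simp [fiberAdjacency, det_succ_row_zero, Fin.sum_univ_succ, Fin.succAbove, one_apply]
  linear_combination (-lam ^ 2 + 5 * lam - 5) * ha + (-lam ^ 2 + 4 * lam - 4) * hb

namespace Complex

theorem exp_I_mul_mul_exp_neg_I_mul (θ : ℝ) : exp (I * θ) * exp (-I * θ) = 1 := by
  rw [← exp_add, ← add_mul, add_neg_cancel, zero_mul, exp_zero]

theorem exp_I_mul_add_exp_neg_I_mul (θ : ℝ) :
    exp (I * θ) + exp (-I * θ) = 2 * Real.cos θ := by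
  rw [ofReal_cos, two_cos, mul_comm I, neg_mul, neg_mul, mul_comm I]

theorem exp_neg_I_mul_mul_exp_I_mul_add_swap (x y : ℝ) :
    exp (-I * x) * exp (I * y) + exp (I * x) * exp (-I * y) = 2 * Real.cos (y - x) := by
  rw [← exp_add, ← exp_add, ← exp_I_mul_add_exp_neg_I_mul]
  push_cast
  ring_nf

end Complex

/-- The characteristic polynomial of the 4×4 fiber magnetic Laplacian
`Δ_α(k) = diag(3,2,2,3) - A_α(k)` equals
`λ⁴ - 10λ³ + 32λ² + 2λ(cos k + cos(k-φ) - 18) - 4cos k - 4cos(k-φ) - 2cos φ + 10`;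
in particular for `φ = π` it is independent of `k` with roots `2±√2, 3±√3`. -/
theorem det_fiber_magnetic_laplacian (φ k : ℝ) (lam : ℂ) :
    let A : Matrix (Fin 4) (Fin 4) ℂ :=
      !![0, Complex.exp (Complex.I * φ), 1, Complex.exp (Complex.I * k);
         Complex.exp (-Complex.I * φ), 0, 0, 1;
         1, 0, 0, 1;
         Complex.exp (-Complex.I * k), 1, 1, 0]
    let Δ : Matrix (Fin 4) (Fin 4) ℂ := Matrix.diagonal ![3, 2, 2, 3] - A
    (Matrix.det (lam • (1 : Matrix (Fin 4) (Fin 4) ℂ) - Δ) =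
      lam ^ 4 - 10 * lam ^ 3 + 32 * lam ^ 2 +
        2 * lam * ((Real.cos k : ℂ) + (Real.cos (k - φ) : ℂ) - 18) -
        4 * (Real.cos k : ℂ) - 4 * (Real.cos (k - φ) : ℂ) - 2 * (Real.cos φ : ℂ) + 10) ∧
    (φ = Real.pi →
      Matrix.det (lam • (1 : Matrix (Fin 4) (Fin 4) ℂ) - Δ) =
        (lam - (2 + (Real.sqrt 2 : ℂ))) * (lam - (2 - (Real.sqrt 2 : ℂ))) *
        (lam - (3 + (Real.sqrt 3 : ℂ))) * (lam - (3 - (Real.sqrt 3 : ℂ)))) := by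
  intro A Δ
  have hdet : det (lam • (1 : Matrix (Fin 4) (Fin 4) ℂ) - Δ) = _ :=
    det_smul_one_sub_diagonal_sub_fiberAdjacency lam _ _ _ _
      (exp_I_mul_mul_exp_neg_I_mul φ) (exp_I_mul_mul_exp_neg_I_mul k)
  simp only [exp_I_mul_add_exp_neg_I_mul, exp_neg_I_mul_mul_exp_I_mul_add_swap] at hdet
  refine ⟨by linear_combination hdet, fun hφ => ?_⟩
  have h2 : ((√2 : ℝ) : ℂ) ^ 2 = 2 := by norm_cast; simp
  have h3 : ((√3 : ℝ) : ℂ) ^ 2 = 3 := by norm_cast; simp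
  rw [hdet, hφ, Real.cos_pi, Real.cos_sub_pi]
  push_cast
  linear_combination (lam ^ 2 - 6 * lam + 6) * h2 +
    (lam ^ 2 - 4 * lam + 4 - ((√2 : ℝ) : ℂ) ^ 2) * h3
end
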